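/- For α ≥ 0, let D_α = diag(e^α, e^{−α/2}, e^{−α/2}) ∈ SL(3,ℝ) and for δ ∈ [0,1] let x_δ ∈ SO(3) be the rotation matrix with first column (δ, √(1−δ²), 0), second column (−√(1−δ²), δ, 0), third column (0,0,1). Then the smallest singular value of D_α x_δ D_α equals e^{−α}; and if the singular values of D_α x_δ D_α are e^{(1+ε)α} ≥ e^{−εα} ≥ e^{−α} for some ε ∈ [−1/2, 1], then δ ≤ e^{(ε−1)α}. -/

import Mathlib

open Real

/-- The operator norm of a `3×3` real matrix acting on Euclidean `ℝ³`. -/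
noncomputable def opNorm3 (g : Matrix (Fin 3) (Fin 3) ℝ) : ℝ :=
  ‖LinearMap.toContinuousLinearMap (Matrix.toEuclideanLin (𝕜 := ℝ) g)‖

/-- `D_α = diag(e^α, e^{−α/2}, e^{−α/2})`. -/
noncomputable def Dmat (α : ℝ) : Matrix (Fin 3) (Fin 3) ℝ :=
  Matrix.diagonal ![exp α, exp (-α / 2), exp (-α / 2)]

/-- The rotation `x_δ` with first column `(δ, √(1−δ²), 0)`. -/
noncomputable def xmat (δ : ℝ) : Matrix (Fin 3) (Fin 3) ℝ :=
  !![δ, -sqrt (1 - δ ^ 2), 0;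
     sqrt (1 - δ ^ 2), δ, 0;
     0, 0, 1]

/-!
Since `x_δ` is orthogonal, `(D_α x_δ D_α)⁻¹ = D_{-α} x_δᵀ D_{-α}` has operator norm at most
`‖D_{-α}‖² = e^α` (as `α ≥ 0`), while its `(2,2)`-entry already equals `e^α`. The bound on `δ`
compares the `(0,0)`-entry `e^α δ e^α` of `D_α x_δ D_α` with its operator norm.
-/

open scoped Matrix.Norms.L2Operator

namespace Matrix

variable {𝕜 m n : Type*} [RCLike 𝕜] [Fintype m] [Fintype n] [DecidableEq n]

lemma norm_apply_le_l2_opNorm (A : Matrix m n 𝕜) (i : m) (j : n) : ‖A i j‖ ≤ ‖A‖ :=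
  calc ‖A i j‖ = ‖(EuclideanSpace.equiv m 𝕜).symm (A *ᵥ EuclideanSpace.single j 1) i‖ := by simp
    _ ≤ ‖(EuclideanSpace.equiv m 𝕜).symm (A *ᵥ EuclideanSpace.single j 1)‖ :=
      PiLp.norm_apply_le _ i
    _ ≤ ‖A‖ * ‖EuclideanSpace.single j (1 : 𝕜)‖ := A.l2_opNorm_mulVec _
    _ = ‖A‖ := by rw [PiLp.norm_single, norm_one, mul_one]

end Matrix

lemma inv_Dmat (α : ℝ) : (Dmat α)⁻¹ = Dmat (-α) := by
  refine Matrix.inv_eq_left_inv ?_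
  rw [Dmat, Dmat, Matrix.diagonal_mul_diagonal, ← Matrix.diagonal_one]
  congr 1
  ext i
  fin_cases i <;> simp [← exp_add] <;> ring

lemma l2_opNorm_Dmat_neg {α : ℝ} (hα : 0 ≤ α) : ‖Dmat (-α)‖ = exp (α / 2) := by
  have : exp (-α) ≤ exp (α / 2) := exp_le_exp.mpr (by linarith)
  simp [Dmat, Pi.norm_def, Fin.univ_succ, this]

lemma xmat_mem_orthogonalGroup {δ : ℝ} (h0 : 0 ≤ δ) (h1 : δ ≤ 1) :
    xmat δ ∈ Matrix.orthogonalGroup (Fin 3) ℝ := by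
  have hs : sqrt (1 - δ ^ 2) ^ 2 = 1 - δ ^ 2 := sq_sqrt (by nlinarith)
  rw [Matrix.mem_orthogonalGroup_iff]
  ext i j
  fin_cases i <;> fin_cases j <;> simp [xmat, Matrix.mul_apply, Fin.sum_univ_three] <;> nlinarith

lemma l2_opNorm_inv_Dmat_mul_xmat_mul_Dmat {α δ : ℝ} (hα : 0 ≤ α) (h0 : 0 ≤ δ) (h1 : δ ≤ 1) :
    ‖(Dmat α * xmat δ * Dmat α)⁻¹‖ = exp α := by
  have hx := xmat_mem_orthogonalGroup h0 h1
  have hxinv : (xmat δ)⁻¹ = star (xmat δ) :=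
    Matrix.inv_eq_left_inv (Unitary.star_mul_self_of_mem hx)
  rw [Matrix.mul_inv_rev, Matrix.mul_inv_rev, hxinv, inv_Dmat, ← mul_assoc]
  set N := Dmat (-α) * star (xmat δ) * Dmat (-α)
  have hN22 : N 2 2 = exp (α / 2) * exp (α / 2) := by simp [N, Dmat, xmat]
  refine le_antisymm ?_ ?_
  · calc ‖N‖ ≤ ‖Dmat (-α)‖ * ‖star (xmat δ)‖ * ‖Dmat (-α)‖ := norm_mul₃_le
      _ = exp (α / 2) * exp (α / 2) := by
        rw [l2_opNorm_Dmat_neg hα, CStarRing.norm_of_mem_unitary (Unitary.star_mem hx), mul_one]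
      _ = exp α := by rw [← exp_add, add_halves]
  · calc exp α = ‖N 2 2‖ := by rw [hN22, ← exp_add, add_halves, norm_of_nonneg (exp_pos α).le]
      _ ≤ ‖N‖ := N.norm_apply_le_l2_opNorm 2 2

lemma le_exp_of_l2_opNorm_Dmat_mul_xmat_mul_Dmat_le {α δ ε : ℝ}
    (hnorm : ‖Dmat α * xmat δ * Dmat α‖ ≤ exp ((1 + ε) * α)) : δ ≤ exp ((ε - 1) * α) := by
  have hM00 : (Dmat α * xmat δ * Dmat α) 0 0 = exp α * δ * exp α := by simp [Dmat, xmat]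
  have hbound : exp α * δ * exp α ≤ exp α * exp ((ε - 1) * α) * exp α := by
    rw [← exp_add, ← exp_add, show α + (ε - 1) * α + α = (1 + ε) * α by ring, ← hM00]
    exact (Real.le_norm_self _).trans ((Matrix.norm_apply_le_l2_opNorm _ 0 0).trans hnorm)
  exact le_of_mul_le_mul_left (le_of_mul_le_mul_right hbound (exp_pos α)) (exp_pos α)

/-- the smallest singular value of `D_α x_δ D_α` equals `e^{−α}`, i.e.
`‖(D_α x_δ D_α)⁻¹‖ = e^α`; and if the singular values of `D_α x_δ D_α` are
`e^{(1+ε)α} ≥ e^{−εα} ≥ e^{−α}` for some `ε ∈ [−1/2,1]` (equivalently, given the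
determinant and the smallest singular value, `‖D_α x_δ D_α‖ = e^{(1+ε)α}`), then
`δ ≤ e^{(ε−1)α}`. -/
theorem stmt13 (α : ℝ) (hα : 0 ≤ α) (δ : ℝ) (hδ0 : 0 ≤ δ) (hδ1 : δ ≤ 1) :
    opNorm3 ((Dmat α * xmat δ * Dmat α)⁻¹) = exp α ∧
    (∀ ε : ℝ, -(1 / 2) ≤ ε → ε ≤ 1 →
      opNorm3 (Dmat α * xmat δ * Dmat α) = exp ((1 + ε) * α) →
      δ ≤ exp ((ε - 1) * α)) :=
  ⟨l2_opNorm_inv_Dmat_mul_xmat_mul_Dmat hα hδ0 hδ1,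
    fun _ _ _ hnorm => le_exp_of_l2_opNorm_Dmat_mul_xmat_mul_Dmat_le hnorm.le⟩
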